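/- If {M₁,…,M_s} is a Hurwitz–Radon family of order n and {L₁,…,L_t} is a Hurwitz–Radon family of order m, then {P⊗M₁⊗E_m, …, P⊗M_s⊗E_m, Q⊗E_n⊗L₁, …, Q⊗E_n⊗L_t, A⊗E_{nm}} is a Hurwitz–Radon family of order 2nm, where A = [[0,1],[-1,0]], P = [[0,1],[1,0]], Q = [[1,0],[0,-1]]. -/

import Mathlib

open Matrix Kronecker BigOperators

/-- A family of square real matrices is a Hurwitz–Radon family if each member is
orthogonal and skew-symmetric, and distinct members anticommute. -/
def IsHRFamily {ι σ : Type*} [Fintype ι] [DecidableEq ι] (A : σ → Matrix ι ι ℝ) : Prop :=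
  (∀ i, A i * (A i)ᵀ = 1) ∧ (∀ i, A i = -(A i)ᵀ) ∧
    ∀ i j, i ≠ j → A i * A j = -(A j * A i)

/-! Kronecker products multiply factorwise, so `X₁ ⊗ Y₁` and `X₂ ⊗ Y₂` anticommute as soon as one
pair of factors anticommutes and the other commutes, and `(X ⊗ Y)ᵀ = Xᵀ ⊗ Yᵀ`. Hence tensoring a
Hurwitz–Radon family with a symmetric orthogonal matrix gives again a Hurwitz–Radon family, and the
three blocks of the new family anticommute with each other because the symmetric orthogonal `P`, `Q`
and the skew orthogonal `A` pairwise anticommute. -/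

namespace Matrix

variable {α l m n p : Type*}

theorem neg_kronecker [Mul α] [HasDistribNeg α] (A : Matrix l m α) (B : Matrix n p α) :
    (-A) ⊗ₖ B = -(A ⊗ₖ B) := by
  ext; simp [neg_mul]

theorem kronecker_neg [Mul α] [HasDistribNeg α] (A : Matrix l m α) (B : Matrix n p α) :
    A ⊗ₖ (-B) = -(A ⊗ₖ B) := by
  ext; simp [mul_neg]

variable [CommRing α] [Fintype l] [Fintype n]

theorem kronecker_mul_transpose_eq_one [DecidableEq l] [DecidableEq n]
    {A : Matrix l l α} {B : Matrix n n α} (hA : A * Aᵀ = 1) (hB : B * Bᵀ = 1) :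
    (A ⊗ₖ B) * (A ⊗ₖ B)ᵀ = 1 := by
  rw [← kroneckerMap_transpose, ← mul_kronecker_mul, hA, hB, one_kronecker_one]

theorem kronecker_anticomm_of_anticomm_of_commute {A₁ A₂ : Matrix l l α} {B₁ B₂ : Matrix n n α}
    (hA : A₁ * A₂ = -(A₂ * A₁)) (hB : Commute B₁ B₂) :
    (A₁ ⊗ₖ B₁) * (A₂ ⊗ₖ B₂) = -((A₂ ⊗ₖ B₂) * (A₁ ⊗ₖ B₁)) := by
  rw [← mul_kronecker_mul, ← mul_kronecker_mul, hA, hB.eq, neg_kronecker]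

theorem kronecker_anticomm_of_commute_of_anticomm {A₁ A₂ : Matrix l l α} {B₁ B₂ : Matrix n n α}
    (hA : Commute A₁ A₂) (hB : B₁ * B₂ = -(B₂ * B₁)) :
    (A₁ ⊗ₖ B₁) * (A₂ ⊗ₖ B₂) = -((A₂ ⊗ₖ B₂) * (A₁ ⊗ₖ B₁)) := by
  rw [← mul_kronecker_mul, ← mul_kronecker_mul, hA.eq, hB, kronecker_neg]

end Matrix

namespace IsHRFamily

variable {ι κ σ τ : Type*} [Fintype ι] [DecidableEq ι] [Fintype κ] [DecidableEq κ]

theorem of_subsingleton [Subsingleton σ] {A : σ → Matrix ι ι ℝ}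
    (hA : ∀ i, A i * (A i)ᵀ = 1) (hA' : ∀ i, A i = -(A i)ᵀ) : IsHRFamily A :=
  ⟨hA, hA', fun i j hij => absurd (Subsingleton.elim i j) hij⟩

theorem sum_elim {A : σ → Matrix ι ι ℝ} {B : τ → Matrix ι ι ℝ} (hA : IsHRFamily A)
    (hB : IsHRFamily B) (hAB : ∀ i j, A i * B j = -(B j * A i)) :
    IsHRFamily (Sum.elim A B) := by
  refine ⟨?_, ?_, ?_⟩
  · rintro (i | i)
    exacts [hA.1 i, hB.1 i]
  · rintro (i | i)
    exacts [hA.2.1 i, hB.2.1 i]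
  · rintro (i | i) (j | j) hij
    · exact hA.2.2 i j (ne_of_apply_ne _ hij)
    · exact hAB i j
    · exact neg_eq_iff_eq_neg.mp (hAB j i).symm
    · exact hB.2.2 i j (ne_of_apply_ne _ hij)

theorem kronecker_left {A : σ → Matrix ι ι ℝ} (hA : IsHRFamily A) {X : Matrix κ κ ℝ}
    (hX : X * Xᵀ = 1) (hXsymm : Xᵀ = X) : IsHRFamily fun i => X ⊗ₖ A i := by
  refine ⟨fun i => kronecker_mul_transpose_eq_one hX (hA.1 i), fun i => ?_,
    fun i j hij => kronecker_anticomm_of_commute_of_anticomm (Commute.refl X) (hA.2.2 i j hij)⟩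
  rw [← kroneckerMap_transpose, hXsymm, ← kronecker_neg, ← hA.2.1 i]

theorem kronecker_right {A : σ → Matrix ι ι ℝ} (hA : IsHRFamily A) {Y : Matrix κ κ ℝ}
    (hY : Y * Yᵀ = 1) (hYsymm : Yᵀ = Y) : IsHRFamily fun i => A i ⊗ₖ Y := by
  refine ⟨fun i => kronecker_mul_transpose_eq_one (hA.1 i) hY, fun i => ?_,
    fun i j hij => kronecker_anticomm_of_anticomm_of_commute (hA.2.2 i j hij) (Commute.refl Y)⟩
  rw [← kroneckerMap_transpose, hYsymm, ← neg_kronecker, ← hA.2.1 i]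

theorem kronecker_one {A : σ → Matrix ι ι ℝ} (hA : IsHRFamily A) :
    IsHRFamily fun i => A i ⊗ₖ (1 : Matrix κ κ ℝ) :=
  hA.kronecker_right (by simp) transpose_one

end IsHRFamily

theorem hr_family_combine {ι κ : Type*} [Fintype ι] [DecidableEq ι]
    [Fintype κ] [DecidableEq κ] {s t : ℕ}
    (M : Fin s → Matrix ι ι ℝ) (hM : IsHRFamily M)
    (L : Fin t → Matrix κ κ ℝ) (hL : IsHRFamily L) :
    IsHRFamily
      (Sum.elim
        (Sum.elim
          (fun i : Fin s => (!![0, 1; 1, 0] ⊗ₖ M i) ⊗ₖ (1 : Matrix κ κ ℝ))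
          (fun j : Fin t => (!![1, 0; 0, -1] ⊗ₖ (1 : Matrix ι ι ℝ)) ⊗ₖ L j))
        (fun _ : Fin 1 => (!![0, 1; -1, 0] ⊗ₖ (1 : Matrix ι ι ℝ)) ⊗ₖ (1 : Matrix κ κ ℝ)) :
        (Fin s ⊕ Fin t) ⊕ Fin 1 → Matrix ((Fin 2 × ι) × κ) ((Fin 2 × ι) × κ) ℝ) := by
  set P : Matrix (Fin 2) (Fin 2) ℝ := !![0, 1; 1, 0]
  set Q : Matrix (Fin 2) (Fin 2) ℝ := !![1, 0; 0, -1]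
  set A : Matrix (Fin 2) (Fin 2) ℝ := !![0, 1; -1, 0]
  have hP : Pᵀ = P := by simp [P, ← ext_iff, Fin.forall_fin_two]
  have hQ : Qᵀ = Q := by simp [Q, ← ext_iff, Fin.forall_fin_two]
  have hA : Aᵀ = -A := by simp [A, ← ext_iff, Fin.forall_fin_two]
  have hPP : P * Pᵀ = 1 := by simp [hP, P, one_fin_two]
  have hQQ : Q * Qᵀ = 1 := by simp [hQ, Q, one_fin_two]
  have hAA : A * Aᵀ = 1 := by simp [hA, A, one_fin_two]
  have hPQ : P * Q = -(Q * P) := by simp [P, Q]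
  have hPA : P * A = -(A * P) := by simp [P, A]
  have hQA : Q * A = -(A * Q) := by simp [Q, A]
  have hMpart := (hM.kronecker_left hPP hP).kronecker_one (κ := κ)
  have hLpart := hL.kronecker_left (X := Q ⊗ₖ (1 : Matrix ι ι ℝ))
    (kronecker_mul_transpose_eq_one hQQ (by simp))
    (by rw [← kroneckerMap_transpose, hQ, transpose_one])
  have hApart := ((IsHRFamily.of_subsingleton (σ := Fin 1) (fun _ => hAA)
    (fun _ => by rw [hA, neg_neg])).kronecker_one (κ := ι)).kronecker_one (κ := κ)
  refine (hMpart.sum_elim hLpart fun i j => ?_).sum_elim hApart ?_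
  · exact kronecker_anticomm_of_anticomm_of_commute
      (kronecker_anticomm_of_anticomm_of_commute hPQ (Commute.one_right _)) (Commute.one_left _)
  · rintro (i | j) -
    · exact kronecker_anticomm_of_anticomm_of_commute
        (kronecker_anticomm_of_anticomm_of_commute hPA (Commute.one_right _)) (Commute.refl 1)
    · exact kronecker_anticomm_of_anticomm_of_commute
        (kronecker_anticomm_of_anticomm_of_commute hQA (Commute.refl 1)) (Commute.one_right _)
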